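/- arXiv:1910.10290 — 2 statements merged into one kernel-verified Lean document; each statement's English description precedes it below -/
import Mathlib

section
/- For all integers j < k, cos(α_j) · G(j+1,k) < G(j,k). -/
/-- Auxiliary recursion: `Gaux s α j n` corresponds to `G(j, j-1+n)`. -/
noncomputable def Gaux (s α : ℤ → ℝ) (j : ℤ) : ℕ → ℝ
  | 0 => 0
  | 1 => 1
  | (n+2) => (2 * s (j + n) + Real.cos (α (j + n)) + Real.cos (α (j + n + 1))) * Gaux s α j (n+1)
      - (Real.cos (α (j + n)))^2 * Gaux s α j n

/-- `G s α j k` is the recursively defined quantity `G(j,k)`, with `G(j,j-1)=0`, `G(j,j)=1`,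
`G(j,k) = (2 s_{k-1} + cos α_{k-1} + cos α_k) G(j,k-1) − cos²(α_{k-1}) G(j,k-2)` for `k ≥ j+1`. -/
noncomputable def G (s α : ℤ → ℝ) (j k : ℤ) : ℝ := Gaux s α j (k - (j-1)).toNat

/-- `Pprod α a b = ∏_{i=a}^{b-1} cos (α i)`. -/
noncomputable def Pprod (α : ℤ → ℝ) (a b : ℤ) : ℝ := ∏ i ∈ Finset.Ico a b, Real.cos (α i)

/-! For a solution of `x (n+2) = (2 t n + a n + a (n+1)) x (n+1) - (a n)² x n` one has
`x (n+2) - a (n+1) x (n+1) = 2 t n x (n+1) + a n (x (n+1) - a n x n)`, so positivity of `x n`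
and of `x (n+1) - a n x n` propagate by induction. The difference
`G(j,k) - cos α_j G(j+1,k)` solves the same recurrence in `k` (it is linear and its
coefficients depend on `k` only), and it equals `1` at `k = j` and `2 s_j + cos α_{j+1}`
at `k = j+1`. -/

theorem pos_and_mul_lt_of_recurrence {t a x : ℕ → ℝ} (ht : ∀ n, 0 ≤ t n) (ha : ∀ n, 0 < a n)
    (hrec : ∀ n, x (n + 2) = (2 * t n + a n + a (n + 1)) * x (n + 1) - a n ^ 2 * x n)
    (h₀ : 0 < x 0) (h₁ : a 0 * x 0 < x 1) :
    ∀ n, 0 < x n ∧ a n * x n < x (n + 1) := by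
  intro n
  induction n with
  | zero => exact ⟨h₀, h₁⟩
  | succ n ih =>
    obtain ⟨hpos, hlt⟩ := ih
    have hpos' : 0 < x (n + 1) := (mul_pos (ha n) hpos).le.trans_lt hlt
    refine ⟨hpos', ?_⟩
    have key : x (n + 2) - a (n + 1) * x (n + 1)
        = 2 * t n * x (n + 1) + a n * (x (n + 1) - a n * x n) := by
      rw [hrec]; ring
    rw [← sub_pos, key]
    exact add_pos_of_nonneg_of_pos (mul_nonneg (mul_nonneg zero_le_two (ht n)) hpos'.le)
      (mul_pos (ha n) (sub_pos.2 hlt))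

theorem Gaux_add_two (s α : ℤ → ℝ) (j : ℤ) (n : ℕ) :
    Gaux s α j (n + 2) = (2 * s (j + n) + Real.cos (α (j + n)) + Real.cos (α (j + n + 1)))
      * Gaux s α j (n + 1) - Real.cos (α (j + n)) ^ 2 * Gaux s α j n := by
  rw [Gaux]

theorem G_sub_one_add (s α : ℤ → ℝ) (j : ℤ) (n : ℕ) : G s α j (j - 1 + n) = Gaux s α j n := by
  simp [G]

/-- `Gdiff s α j n = G(j, j+n) - cos α_j G(j+1, j+n)`. -/
noncomputable def Gdiff (s α : ℤ → ℝ) (j : ℤ) (n : ℕ) : ℝ :=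
  Gaux s α j (n + 1) - Real.cos (α j) * Gaux s α (j + 1) n

theorem Gdiff_add_two (s α : ℤ → ℝ) (j : ℤ) (n : ℕ) :
    Gdiff s α j (n + 2) = (2 * s (j + 1 + n) + Real.cos (α (j + 1 + n))
      + Real.cos (α (j + 1 + (n + 1)))) * Gdiff s α j (n + 1)
      - Real.cos (α (j + 1 + n)) ^ 2 * Gdiff s α j n := by
  simp only [Gdiff, Gaux_add_two s α j (n + 1), Gaux_add_two s α (j + 1) n]
  push_cast
  ring_nf

theorem Gdiff_zero (s α : ℤ → ℝ) (j : ℤ) : Gdiff s α j 0 = 1 := by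
  simp [Gdiff, Gaux]

theorem Gdiff_one (s α : ℤ → ℝ) (j : ℤ) :
    Gdiff s α j 1 = 2 * s j + Real.cos (α (j + 1)) := by
  simp [Gdiff, Gaux]
  ring

theorem Gdiff_pos (s α : ℤ → ℝ) (hs : ∀ i, 0 < s i) (hα : ∀ i, 0 < Real.cos (α i)) (j : ℤ)
    (n : ℕ) : 0 < Gdiff s α j n := by
  refine (pos_and_mul_lt_of_recurrence (t := fun n => s (j + 1 + n))
    (a := fun n => Real.cos (α (j + 1 + n))) (fun _ => (hs _).le) (fun _ => hα _)
    (Gdiff_add_two s α j) ?_ ?_ n).1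
  · simp [Gdiff_zero]
  · simp [Gdiff_zero, Gdiff_one, hs j]

theorem stmt7 (s α : ℤ → ℝ) (hs : ∀ i, 0 < s i) (hα : ∀ i, 0 < Real.cos (α i))
    (j k : ℤ) (hjk : j < k) :
    Real.cos (α j) * G s α (j+1) k < G s α j k := by
  obtain ⟨n, rfl⟩ : ∃ n : ℕ, k = j + n := ⟨(k - j).toNat, by omega⟩
  have hG : G s α j (j + n) = Gaux s α j (n + 1) := by
    rw [← G_sub_one_add]; push_cast; ring_nf
  have hG' : G s α (j + 1) (j + n) = Gaux s α (j + 1) n := by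
    rw [← G_sub_one_add]; ring_nf
  rw [hG, hG']
  exact sub_pos.1 (Gdiff_pos s α hs hα j n)
end

section
/- Let N ≥ 1, write P := (−1)^{N+1} Π(0,N) and D := G(0,N) − cos²(α_0) G(1,N-1) + 2P. Then the determinant of the matrix [[G(0,N) + P, cos α_0 · G(1,N)], [−cos α_0 · G(0,N-1), −cos²(α_0) G(1,N-1) + P]] equals P · D. -/
section Recursion

variable (s α : ℤ → ℝ) (j : ℤ)

lemma G_pred_self : G s α j (j - 1) = 0 := by
  simp [G, Gaux]

lemma G_self : G s α j j = 1 := by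
  simp [G, Gaux]

lemma G_eq_of_lt {k : ℤ} (hk : j < k) :
    G s α j k = (2 * s (k - 1) + Real.cos (α (k - 1)) + Real.cos (α k)) * G s α j (k - 1)
      - Real.cos (α (k - 1)) ^ 2 * G s α j (k - 2) := by
  obtain ⟨n, rfl⟩ : ∃ n : ℕ, k = j + n + 1 := ⟨(k - j - 1).toNat, by omega⟩
  have h0 : (j + n + 1 - (j - 1)).toNat = n + 2 := by omega
  have h1 : (j + n - (j - 1)).toNat = n + 1 := by omega
  have h2 : (j + n + 1 - 2 - (j - 1)).toNat = n := by omega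
  simp only [G, add_sub_cancel_right, h0, h1, h2]
  rfl

end Recursion

lemma Pprod_add_one_right (α : ℤ → ℝ) {a b : ℤ} (hab : a ≤ b) :
    Pprod α a (b + 1) = Pprod α a b * Real.cos (α b) := by
  rw [Pprod, ← Finset.insert_Ico_right_eq_Ico_add_one hab, Finset.prod_insert (by simp),
    mul_comm, Pprod]

lemma Pprod_eq_cos_mul (α : ℤ → ℝ) {a b : ℤ} (hab : a < b) :
    Pprod α a b = Real.cos (α a) * Pprod α (a + 1) b := by
  rw [Pprod, ← Finset.insert_Ico_add_one_left_eq_Ico hab, Finset.prod_insert (by simp), Pprod]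

theorem G_casoratian (s α : ℤ → ℝ) {j k : ℤ} (hk : j < k) :
    G s α j (k - 1) * G s α (j + 1) k - G s α j k * G s α (j + 1) (k - 1)
      = Pprod α (j + 1) k ^ 2 := by
  induction k, hk using Int.leInduction with
  | base =>
    have hpred := G_pred_self s α (j + 1)
    rw [add_sub_cancel_right] at hpred
    rw [add_sub_cancel_right, G_self, G_self, hpred]
    simp [Pprod]
  | succ k hk ih =>
    rw [add_sub_cancel_right, G_eq_of_lt s α (j + 1) (by omega : j + 1 < k + 1),
      G_eq_of_lt s α j (by omega : j < k + 1), Pprod_add_one_right α hk]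
    simp only [add_sub_cancel_right, show k + 1 - 2 = k - 1 by ring]
    linear_combination Real.cos (α k) ^ 2 * ih

theorem stmt11 (s α : ℤ → ℝ) (N : ℤ) (hN : 1 ≤ N) :
    Matrix.det !![G s α 0 N + (-1 : ℝ)^(N+1).toNat * Pprod α 0 N,
        Real.cos (α 0) * G s α 1 N;
        -Real.cos (α 0) * G s α 0 (N-1),
        -(Real.cos (α 0))^2 * G s α 1 (N-1) + (-1 : ℝ)^(N+1).toNat * Pprod α 0 N]
      = ((-1 : ℝ)^(N+1).toNat * Pprod α 0 N) *
        (G s α 0 N - (Real.cos (α 0))^2 * G s α 1 (N-1)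
          + 2 * ((-1 : ℝ)^(N+1).toNat * Pprod α 0 N)) := by
  have hW := G_casoratian s α (by omega : (0 : ℤ) < N)
  have hP := Pprod_eq_cos_mul α (by omega : (0 : ℤ) < N)
  have hsign : ((-1 : ℝ) ^ (N + 1).toNat) ^ 2 = 1 := by
    rw [← pow_mul, mul_comm, pow_mul, neg_one_sq, one_pow]
  rw [zero_add] at hW hP
  rw [Matrix.det_fin_two_of, hP]
  linear_combination Real.cos (α 0) ^ 2 * hW - (Real.cos (α 0) * Pprod α 1 N) ^ 2 * hsign
end
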